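/- Under the quasi-neutrality hypothesis ρₑⱼⁿ = ρᵢⱼⁿ ≠ 0 for all j, the double limit (ε,λ²) → (0,0) of the discretized Poisson Laplacian [∂ₓₓφ]^{n+1/2}ⱼ equals the centered second difference of ln ρₑⁿ: (ln ρₑ,ⱼ₊₁ⁿ + ln ρₑ,ⱼ₋₁ⁿ − 2 ln ρₑ,ⱼⁿ)/Δx². -/

import Mathlib

open Filter Topology

/-- No genuine double limit is involved: `√` is continuous, so the quotient is continuous at the
origin, where its denominator is `c ≠ 0`. -/
theorem tendsto_poissonQuotient_nhds_zero {a b c K1 Kh K0 : ℝ} (hc : c ≠ 0) :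
    Tendsto (fun p : ℝ × ℝ =>
        (p.1 * a - b * (p.1 * K1 - Real.sqrt p.1 * Kh - K0)) /
          (p.2 * (p.1 * K1 - Real.sqrt p.1 * Kh - K0) + c))
      (𝓝 (0, 0)) (𝓝 (b * K0 / c)) := by
  have hcont : ContinuousAt (fun p : ℝ × ℝ =>
      (p.1 * a - b * (p.1 * K1 - Real.sqrt p.1 * Kh - K0)) /
        (p.2 * (p.1 * K1 - Real.sqrt p.1 * Kh - K0) + c)) (0, 0) := by
    apply ContinuousAt.div
    · fun_prop
    · fun_prop
    · simpa using hc
  convert hcont.tendsto using 2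
  simp

theorem stmt_2_general (ρe ρi : ℤ → ℝ) (j : ℤ) (Δt Δx K1 Kh : ℝ)
    (hΔt : 0 < Δt)
    (hqn : ∀ i : ℤ, ρe i = ρi i) (hne : ∀ i : ℤ, ρe i ≠ 0) :
    Tendsto (fun p : ℝ × ℝ =>
        (p.1 * ρe j -
            ρi j * (p.1 * K1 - Real.sqrt p.1 * Kh -
              Δt ^ 2 / Δx ^ 2 *
                (Real.log (ρe (j + 1)) + Real.log (ρe (j - 1)) - 2 * Real.log (ρe j)))) /
          (p.2 * (p.1 * K1 - Real.sqrt p.1 * Kh -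
              Δt ^ 2 / Δx ^ 2 *
                (Real.log (ρe (j + 1)) + Real.log (ρe (j - 1)) - 2 * Real.log (ρe j)))
            + Δt ^ 2 * ρe j))
      ((𝓝[>] (0 : ℝ)) ×ˢ (𝓝[>] (0 : ℝ)))
      (𝓝 ((Real.log (ρe (j + 1)) + Real.log (ρe (j - 1)) - 2 * Real.log (ρe j)) / Δx ^ 2)) := by
  rw [← nhdsWithin_prod_eq]
  convert (tendsto_poissonQuotient_nhds_zero
    (mul_ne_zero (pow_ne_zero 2 hΔt.ne') (hne j))).mono_left nhdsWithin_le_nhds using 2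
  rw [← hqn j]
  field_simp [hne j, hΔt.ne']

/-- Under quasi-neutrality ρₑⱼⁿ = ρᵢⱼⁿ ≠ 0, the double limit (ε,λ²) → (0⁺,0⁺) of the
discretized Poisson Laplacian equals the centered second difference of ln ρₑⁿ. -/
theorem stmt_2 (ρe ρi : ℤ → ℝ) (j : ℤ) (Δt Δx K1 Kh : ℝ)
    (hΔt : 0 < Δt) (hΔx : 0 < Δx)
    (hqn : ∀ i : ℤ, ρe i = ρi i) (hne : ∀ i : ℤ, ρe i ≠ 0) :
    Tendsto (fun p : ℝ × ℝ =>
        (p.1 * ρe j -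
            ρi j * (p.1 * K1 - Real.sqrt p.1 * Kh -
              Δt ^ 2 / Δx ^ 2 *
                (Real.log (ρe (j + 1)) + Real.log (ρe (j - 1)) - 2 * Real.log (ρe j)))) /
          (p.2 * (p.1 * K1 - Real.sqrt p.1 * Kh -
              Δt ^ 2 / Δx ^ 2 *
                (Real.log (ρe (j + 1)) + Real.log (ρe (j - 1)) - 2 * Real.log (ρe j)))
            + Δt ^ 2 * ρe j))
      ((𝓝[>] (0 : ℝ)) ×ˢ (𝓝[>] (0 : ℝ)))
      (𝓝 ((Real.log (ρe (j + 1)) + Real.log (ρe (j - 1)) - 2 * Real.log (ρe j)) / Δx ^ 2)) :=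
  stmt_2_general ρe ρi j Δt Δx K1 Kh hΔt hqn hne
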